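/- Let F be a Minkowski norm on a 2-dimensional Lie algebra g with basis e_1, e_2 satisfying [e_1, e_2] = e_2, let g_y denote its fundamental tensor, and define η : g \ {0} → g by g_y(η(y), u) = g_y(y, [u, y]) for all u ∈ g. Then the set of points y on the indicatrix S_F = {y : F(y) = 1} where η(y) = 0 consists of exactly two points. -/

import Mathlib

/-- The fundamental tensor of a Minkowski norm `F`:
`g_y(u,v) = (1/2) ∂²/∂s∂t [F²(y + su + tv)]|₀`, written via iterated Fréchet
derivatives of `F²`. -/
noncomputable def fundTensor (F : ℝ × ℝ → ℝ) (y u v : ℝ × ℝ) : ℝ :=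
  (1 / 2 : ℝ) * fderiv ℝ (fun z => fderiv ℝ (fun w => (F w) ^ 2) z v) y u

/-- The bracket of the 2-dimensional non-abelian Lie algebra with `[e₁, e₂] = e₂`
(in the basis `e₁ = (1,0)`, `e₂ = (0,1)` of `ℝ²`). -/
def brkt (u y : ℝ × ℝ) : ℝ × ℝ := (0, u.1 * y.2 - u.2 * y.1)

namespace S19

open Set
open scoped ContDiff

/-- The square of the Minkowski norm. -/
noncomputable def f2 (F : ℝ × ℝ → ℝ) : ℝ × ℝ → ℝ := fun w => (F w) ^ 2

/-- The partial derivative of `F²` in the direction `e₂ = (0,1)`. -/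
noncomputable def g2 (F : ℝ × ℝ → ℝ) : ℝ × ℝ → ℝ :=
  fun y => fderiv ℝ (f2 F) y ((0 : ℝ), (1 : ℝ))

variable {F : ℝ × ℝ → ℝ}

lemma fundTensor_e2 (y u : ℝ × ℝ) :
    fundTensor F y u ((0:ℝ),(1:ℝ)) = (1/2 : ℝ) * fderiv ℝ (g2 F) y u := rfl

lemma f2_contDiffOn (hF : ContDiffOn ℝ (⊤ : ℕ∞) F {y : ℝ×ℝ | y ≠ 0}) :
    ContDiffOn ℝ ∞ (f2 F) {y : ℝ×ℝ | y ≠ 0} := (hF.of_le (by simp)).pow 2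

lemma f2_diffAt (hF : ContDiffOn ℝ ∞ (f2 F) {y : ℝ×ℝ | y ≠ 0}) {y : ℝ×ℝ} (hy : y ≠ 0) :
    DifferentiableAt ℝ (f2 F) y :=
  (hF.contDiffAt (isOpen_ne.mem_nhds hy)).differentiableAt
    (by simp)

lemma g2_contDiffOn (hF : ContDiffOn ℝ ∞ (f2 F) {y : ℝ×ℝ | y ≠ 0}) :
    ContDiffOn ℝ ∞ (g2 F) {y : ℝ×ℝ | y ≠ 0} :=
  (hF.fderiv_of_isOpen isOpen_ne (le_of_eq (by rfl))).clm_apply contDiffOn_const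

lemma g2_diffAt (hF : ContDiffOn ℝ ∞ (f2 F) {y : ℝ×ℝ | y ≠ 0}) {y : ℝ×ℝ} (hy : y ≠ 0) :
    DifferentiableAt ℝ (g2 F) y :=
  ((g2_contDiffOn hF).contDiffAt (isOpen_ne.mem_nhds hy)).differentiableAt
    (by simp)

lemma f2_hom (hFhom : ∀ (c : ℝ) (y : ℝ × ℝ), 0 < c → F (c • y) = c * F y)
    {c : ℝ} (hc : 0 < c) (y : ℝ × ℝ) : f2 F (c • y) = c ^ 2 * f2 F y := by
  simp only [f2, hFhom c y hc]; ring

lemma fderiv_f2_smul (hF : ContDiffOn ℝ ∞ (f2 F) {y : ℝ×ℝ | y ≠ 0})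
    (hFhom : ∀ (c : ℝ) (y : ℝ × ℝ), 0 < c → F (c • y) = c * F y)
    {c : ℝ} (hc : 0 < c) {y : ℝ×ℝ} (hy : y ≠ 0) (v : ℝ×ℝ) :
    fderiv ℝ (f2 F) (c • y) v = c * fderiv ℝ (f2 F) y v := by
  have hcy : c • y ≠ 0 := smul_ne_zero (ne_of_gt hc) hy
  have h1 : HasFDerivAt (f2 F) (fderiv ℝ (f2 F) (c • y)) (c • y) :=
    (f2_diffAt hF hcy).hasFDerivAt
  have hlin : HasFDerivAt (fun z : ℝ×ℝ => c • z) (c • ContinuousLinearMap.id ℝ (ℝ×ℝ)) y := by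
    exact (hasFDerivAt_id y).const_smul c
  have h2 := h1.comp y hlin
  have h3 : ((fun z => f2 F (c • z)) : ℝ×ℝ → ℝ) = fun z => c ^ 2 * f2 F z :=
    funext fun z => f2_hom hFhom hc z
  rw [show (f2 F ∘ fun z : ℝ×ℝ => c • z) = fun z => c ^ 2 * f2 F z from h3] at h2
  have h4 : HasFDerivAt (fun z => c ^ 2 * f2 F z) (c ^ 2 • fderiv ℝ (f2 F) y) y :=
    (f2_diffAt hF hy).hasFDerivAt.const_mul (c ^ 2)
  have h5 := h2.unique h4
  have h6 := congrArg (fun L : (ℝ×ℝ) →L[ℝ] ℝ => L v) h5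
  simp only [ContinuousLinearMap.comp_apply, ContinuousLinearMap.smul_apply,
    ContinuousLinearMap.coe_id', id_eq, map_smul, smul_eq_mul] at h6
  exact mul_left_cancel₀ (ne_of_gt hc)
    (by linarith [h6] : c * (fderiv ℝ (f2 F) (c • y) v) = c * (c * fderiv ℝ (f2 F) y v))

lemma g2_smul (hF : ContDiffOn ℝ ∞ (f2 F) {y : ℝ×ℝ | y ≠ 0})
    (hFhom : ∀ (c : ℝ) (y : ℝ × ℝ), 0 < c → F (c • y) = c * F y)
    {c : ℝ} (hc : 0 < c) {y : ℝ×ℝ} (hy : y ≠ 0) :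
    g2 F (c • y) = c * g2 F y :=
  fderiv_f2_smul hF hFhom hc hy _

lemma euler_gen {h : ℝ×ℝ → ℝ} {y : ℝ×ℝ} (hdiff : DifferentiableAt ℝ h y) (n : ℕ)
    (hhom : ∀ c : ℝ, 0 < c → h (c • y) = c ^ n * h y) :
    fderiv ℝ h y y = n * h y := by
  have hcurve : HasDerivAt (fun c : ℝ => c • y) y 1 := by
    simpa using (hasDerivAt_id (1:ℝ)).smul_const y
  have h1 : HasDerivAt (fun c : ℝ => h (c • y)) (fderiv ℝ h y y) 1 := by
    have hf : HasFDerivAt h (fderiv ℝ h y) ((fun c : ℝ => c • y) 1) := by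
      simpa [one_smul] using hdiff.hasFDerivAt
    exact hf.comp_hasDerivAt 1 hcurve
  have hev : (fun c : ℝ => h (c • y)) =ᶠ[nhds (1:ℝ)] fun c => c ^ n * h y := by
    filter_upwards [Ioi_mem_nhds (zero_lt_one)] with c hc
    exact hhom c hc
  have h2 : HasDerivAt (fun c : ℝ => c ^ n * h y) (n * h y) 1 := by
    simpa using (hasDerivAt_pow n (1:ℝ)).mul_const (h y)
  exact h1.unique (h2.congr_of_eventuallyEq hev)

lemma euler_f2 (hF : ContDiffOn ℝ ∞ (f2 F) {y : ℝ×ℝ | y ≠ 0})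
    (hFhom : ∀ (c : ℝ) (y : ℝ × ℝ), 0 < c → F (c • y) = c * F y)
    {y : ℝ×ℝ} (hy : y ≠ 0) :
    fderiv ℝ (f2 F) y y = 2 * f2 F y := by
  have := euler_gen (f2_diffAt hF hy) 2 (fun c hc => f2_hom hFhom hc y)
  simpa using this

lemma euler_g2 (hF : ContDiffOn ℝ ∞ (f2 F) {y : ℝ×ℝ | y ≠ 0})
    (hFhom : ∀ (c : ℝ) (y : ℝ × ℝ), 0 < c → F (c • y) = c * F y)
    {y : ℝ×ℝ} (hy : y ≠ 0) :
    fderiv ℝ (g2 F) y y = g2 F y := by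
  have := euler_gen (g2_diffAt hF hy) 1 (fun c hc => by
    simpa using g2_smul hF hFhom hc hy)
  simpa using this

lemma fundTensor_snd (hF : ContDiffOn ℝ ∞ (f2 F) {y : ℝ×ℝ | y ≠ 0})
    {y : ℝ×ℝ} (hy : y ≠ 0) (u : ℝ×ℝ) (c : ℝ) :
    fundTensor F y u ((0:ℝ), c) = c * ((1/2 : ℝ) * fderiv ℝ (g2 F) y u) := by
  have hinner : (fun z : ℝ×ℝ => fderiv ℝ (fun w => (F w) ^ 2) z ((0:ℝ), c))
      = fun z => c * g2 F z := by
    funext z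
    have h0 : ((0:ℝ), c) = c • (((0:ℝ), (1:ℝ)) : ℝ×ℝ) := by simp [Prod.ext_iff]
    rw [h0, map_smul, smul_eq_mul]
    rfl
  unfold fundTensor
  rw [hinner, fderiv_const_mul (g2_diffAt hF hy) c]
  simp only [ContinuousLinearMap.smul_apply, smul_eq_mul]
  ring

lemma fundTensor_y_snd (hF : ContDiffOn ℝ ∞ (f2 F) {y : ℝ×ℝ | y ≠ 0})
    (hFhom : ∀ (c : ℝ) (y : ℝ × ℝ), 0 < c → F (c • y) = c * F y)
    {y : ℝ×ℝ} (hy : y ≠ 0) (c : ℝ) :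
    fundTensor F y y ((0:ℝ), c) = c / 2 * g2 F y := by
  rw [fundTensor_snd hF hy y c, euler_g2 hF hFhom hy]; ring

lemma fundTensor_zero_left (y u : ℝ×ℝ) : fundTensor F y (0 : ℝ×ℝ) u = 0 := by
  unfold fundTensor; simp

/-- Key equivalence: for `y ≠ 0`, `η y = 0 ↔ ∂₂(F²)(y) = 0`. -/
lemma eta_zero_iff (hF : ContDiffOn ℝ ∞ (f2 F) {y : ℝ×ℝ | y ≠ 0})
    (hFhom : ∀ (c : ℝ) (y : ℝ × ℝ), 0 < c → F (c • y) = c * F y)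
    (hFconv : ∀ y : ℝ × ℝ, y ≠ 0 → ∀ u : ℝ × ℝ, u ≠ 0 → 0 < fundTensor F y u u)
    (η : ℝ × ℝ → ℝ × ℝ)
    (hη : ∀ y : ℝ × ℝ, y ≠ 0 → ∀ u : ℝ × ℝ,
      fundTensor F y (η y) u = fundTensor F y y (brkt u y))
    {y : ℝ×ℝ} (hy : y ≠ 0) :
    η y = 0 ↔ g2 F y = 0 := by
  constructor
  · intro h0
    by_contra hg
    have h1 := hη y hy (1, 0)
    have h2 := hη y hy (0, 1)
    rw [h0, fundTensor_zero_left] at h1 h2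
    have hb1 : brkt ((1:ℝ),(0:ℝ)) y = ((0:ℝ), y.2) := by simp [brkt]
    have hb2 : brkt ((0:ℝ),(1:ℝ)) y = ((0:ℝ), -y.1) := by simp [brkt]
    rw [hb1, fundTensor_y_snd hF hFhom hy] at h1
    rw [hb2, fundTensor_y_snd hF hFhom hy] at h2
    have hy2 : y.2 = 0 := by
      rcases mul_eq_zero.mp h1.symm with h | h
      · linarith [h]
      · exact absurd h hg
    have hy1 : y.1 = 0 := by
      rcases mul_eq_zero.mp h2.symm with h | h
      · linarith [h]
      · exact absurd h hg
    exact hy (Prod.ext hy1 hy2)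
  · intro hg
    by_contra hne
    have h1 := hη y hy (η y)
    have hb : brkt (η y) y = ((0:ℝ), (η y).1 * y.2 - (η y).2 * y.1) := rfl
    rw [hb, fundTensor_y_snd hF hFhom hy, hg] at h1
    have := hFconv y hy (η y) hne
    rw [h1] at this
    simp at this

/-- Coercivity of a Minkowski norm. -/
lemma coercive (hFsmooth : ContDiffOn ℝ (⊤ : ℕ∞) F {y : ℝ × ℝ | y ≠ 0})
    (hFpos : ∀ y : ℝ × ℝ, y ≠ 0 → 0 < F y)
    (hFhom : ∀ (c : ℝ) (y : ℝ × ℝ), 0 < c → F (c • y) = c * F y) :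
    ∃ m : ℝ, 0 < m ∧ ∀ y : ℝ×ℝ, y ≠ 0 → m * ‖y‖ ≤ F y := by
  have hc : IsCompact (Metric.sphere (0:ℝ×ℝ) 1) := isCompact_sphere 0 1
  have hne : (Metric.sphere (0:ℝ×ℝ) 1).Nonempty := NormedSpace.sphere_nonempty.mpr zero_le_one
  have hsub : Metric.sphere (0:ℝ×ℝ) 1 ⊆ {y : ℝ×ℝ | y ≠ 0} := fun y hy => by
    simp only [mem_sphere_iff_norm, sub_zero] at hy
    intro h0; rw [h0] at hy; simp at hy
  obtain ⟨y₀, hy₀mem, hy₀min⟩ := hc.exists_isMinOn hne (hFsmooth.continuousOn.mono hsub)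
  refine ⟨F y₀, hFpos y₀ (hsub hy₀mem), fun y hy => ?_⟩
  have hr : (0:ℝ) < ‖y‖ := norm_pos_iff.mpr hy
  have hmem : ‖y‖⁻¹ • y ∈ Metric.sphere (0:ℝ×ℝ) 1 := by
    simp [norm_smul, abs_of_pos (inv_pos.mpr hr), inv_mul_cancel₀ (ne_of_gt hr)]
  have hmin := hy₀min hmem
  have heq : F y = ‖y‖ * F (‖y‖⁻¹ • y) := by
    have := hFhom ‖y‖ (‖y‖⁻¹ • y) hr
    rw [smul_smul, mul_inv_cancel₀ (ne_of_gt hr), one_smul] at this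
    linarith [this]
  rw [heq]
  have hle : F y₀ ≤ F (‖y‖⁻¹ • y) := hmin
  nlinarith

/-- On each vertical line `{(x, t) : t ∈ ℝ}` with `x ≠ 0`, the partial derivative
`∂₂(F²)` has exactly one zero. -/
lemma exists_unique_zero
    (hF : ContDiffOn ℝ ∞ (f2 F) {y : ℝ×ℝ | y ≠ 0})
    (hFconv : ∀ y : ℝ × ℝ, y ≠ 0 → ∀ u : ℝ × ℝ, u ≠ 0 → 0 < fundTensor F y u u)
    {m : ℝ} (hm : 0 < m) (hcoer : ∀ y : ℝ×ℝ, y ≠ 0 → m * ‖y‖ ≤ F y)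
    {x : ℝ} (hx : x ≠ 0) :
    ∃! t : ℝ, g2 F (x, t) = 0 := by
  set ψ : ℝ → ℝ := fun s => g2 F (x, s) with hψ
  set φ : ℝ → ℝ := fun s => f2 F (x, s) with hφ
  have hne : ∀ t : ℝ, ((x, t) : ℝ×ℝ) ≠ 0 := fun t h => hx (congrArg Prod.fst h)
  have hcurve : ∀ t : ℝ, HasDerivAt (fun s : ℝ => ((x, s) : ℝ×ℝ)) ((0:ℝ),(1:ℝ)) t :=
    fun t => HasDerivAt.prodMk (hasDerivAt_const t x) (hasDerivAt_id t)
  have hψd : ∀ t : ℝ, HasDerivAt ψ (2 * fundTensor F (x,t) ((0:ℝ),(1:ℝ)) ((0:ℝ),(1:ℝ))) t := by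
    intro t
    have h1 := ((g2_diffAt hF (hne t)).hasFDerivAt).comp_hasDerivAt t (hcurve t)
    have h2 : fderiv ℝ (g2 F) (x,t) ((0:ℝ),(1:ℝ))
        = 2 * fundTensor F (x,t) ((0:ℝ),(1:ℝ)) ((0:ℝ),(1:ℝ)) := by
      rw [fundTensor_e2]; ring
    rw [h2] at h1
    exact h1
  have hψpos : ∀ t : ℝ, 0 < deriv ψ t := by
    intro t
    rw [(hψd t).deriv]
    have := hFconv (x,t) (hne t) ((0:ℝ),(1:ℝ)) (by norm_num [Prod.ext_iff])
    linarith
  have hmono : StrictMono ψ := strictMono_of_deriv_pos hψpos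
  have hφd : ∀ t : ℝ, HasDerivAt φ (ψ t) t := by
    intro t
    exact ((f2_diffAt hF (hne t)).hasFDerivAt).comp_hasDerivAt t (hcurve t)
  have hgrow : ∀ t : ℝ, m ^ 2 * t ^ 2 ≤ φ t := by
    intro t
    have h1 := hcoer (x,t) (hne t)
    have h2 : |t| ≤ ‖((x,t) : ℝ×ℝ)‖ := by
      simpa [Real.norm_eq_abs] using norm_snd_le ((x,t) : ℝ×ℝ)
    have h3 : 0 ≤ ‖((x,t) : ℝ×ℝ)‖ := norm_nonneg _
    have hmt : m * |t| ≤ F (x,t) := le_trans (by nlinarith) h1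
    have habs : (0:ℝ) ≤ |t| := abs_nonneg t
    have hF0 : 0 ≤ F (x,t) := le_trans (by positivity) hmt
    have hsq := mul_le_mul hmt hmt (by positivity) hF0
    have hta := sq_abs t
    simp only [hφ, f2]
    nlinarith [hsq, hta]
  set b : ℝ := max 1 ((φ 0 + 1)/m^2) with hb
  have hb1 : (1:ℝ) ≤ b := le_max_left _ _
  have hb0 : (0:ℝ) < b := lt_of_lt_of_le one_pos hb1
  have hbig : ∀ s : ℝ, b ≤ |s| → φ 0 + 1 ≤ φ s := by
    intro s hs
    have h1 : (φ 0 + 1)/m^2 ≤ b := le_max_right _ _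
    have h2 : m^2 * s^2 ≤ φ s := hgrow s
    have h3 : b ≤ s^2 := by nlinarith [sq_abs s, abs_nonneg s]
    have hm2 : (0:ℝ) < m^2 := by positivity
    have : φ 0 + 1 ≤ m^2 * b := by
      rw [div_le_iff₀ hm2] at h1; linarith
    nlinarith
  have hcont : Continuous ψ := continuous_iff_continuousAt.mpr fun t => (hψd t).continuousAt
  have hφcont : Continuous φ := continuous_iff_continuousAt.mpr fun t => (hφd t).continuousAt
  obtain ⟨c, hcmem, hc⟩ := exists_hasDerivAt_eq_slope φ ψ hb0 hφcont.continuousOn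
    (fun t _ => hφd t)
  have hcpos : 0 < ψ c := by
    have h1 := hbig b (le_abs_self b)
    rw [hc]
    apply div_pos (by linarith) (by linarith)
  obtain ⟨d, hdmem, hd⟩ := exists_hasDerivAt_eq_slope φ ψ (by linarith : -b < 0)
    hφcont.continuousOn (fun t _ => hφd t)
  have hdneg : ψ d < 0 := by
    rw [hd]
    have := hbig (-b) (by rw [abs_neg]; exact le_abs_self b)
    have hnum : φ 0 - φ (-b) < 0 := by linarith
    have hden : (0:ℝ) < 0 - (-b) := by linarith
    exact div_neg_of_neg_of_pos hnum hden
  have hdc : d < c := hmono.lt_iff_lt.mp (lt_trans hdneg hcpos)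
  have hsub := intermediate_value_Icc (le_of_lt hdc) hcont.continuousOn
  have h0mem : (0:ℝ) ∈ Icc (ψ d) (ψ c) := ⟨le_of_lt hdneg, le_of_lt hcpos⟩
  obtain ⟨t0, _, ht0⟩ := hsub h0mem
  exact ⟨t0, ht0, fun t' ht' => hmono.injective (ht'.trans ht0.symm)⟩

end S19

open scoped ContDiff

/-- let `F` be a Minkowski norm on the 2-dimensional non-abelian Lie
algebra `g` (`[e₁, e₂] = e₂`), with fundamental tensor `g_y`, and let
`η : g \ {0} → g` be defined by `g_y(η(y), u) = g_y(y, [u, y])` for all `u`.  Then `η`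
vanishes at exactly two points of the indicatrix `S_F = {y : F y = 1}`. -/
theorem statement19
    (F : ℝ × ℝ → ℝ)
    (hFsmooth : ContDiffOn ℝ (⊤ : ℕ∞) F {y : ℝ × ℝ | y ≠ 0})
    (hFpos : ∀ y : ℝ × ℝ, y ≠ 0 → 0 < F y)
    (hFhom : ∀ (c : ℝ) (y : ℝ × ℝ), 0 < c → F (c • y) = c * F y)
    (hFconv : ∀ y : ℝ × ℝ, y ≠ 0 → ∀ u : ℝ × ℝ, u ≠ 0 → 0 < fundTensor F y u u)
    (η : ℝ × ℝ → ℝ × ℝ)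
    (hη : ∀ y : ℝ × ℝ, y ≠ 0 → ∀ u : ℝ × ℝ,
      fundTensor F y (η y) u = fundTensor F y y (brkt u y)) :
    ∃ y₁ y₂ : ℝ × ℝ, y₁ ≠ y₂ ∧
      {y : ℝ × ℝ | F y = 1 ∧ η y = 0} = {y₁, y₂} := by
  have hf2 : ContDiffOn ℝ (∞ : WithTop ℕ∞) (S19.f2 F) {y : ℝ×ℝ | y ≠ 0} :=
    S19.f2_contDiffOn hFsmooth
  obtain ⟨m, hm, hcoer⟩ := S19.coercive hFsmooth hFpos hFhom
  obtain ⟨a, ha, hau⟩ := S19.exists_unique_zero hf2 hFconv hm hcoer (one_ne_zero)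
  obtain ⟨b, hb, hbu⟩ := S19.exists_unique_zero hf2 hFconv hm hcoer
    (x := -1) (by norm_num)
  have hF0 : F 0 = 0 := by
    have := hFhom 2 0 two_pos
    simp only [smul_zero] at this
    linarith
  have hpa : (((1:ℝ), a) : ℝ×ℝ) ≠ 0 := fun h => one_ne_zero (congrArg Prod.fst h)
  have hqb : (((-1:ℝ), b) : ℝ×ℝ) ≠ 0 := fun h =>
    (by norm_num : (-1:ℝ) ≠ 0) (congrArg Prod.fst h)
  have hFa : 0 < F (1, a) := hFpos _ hpa
  have hFb : 0 < F (-1, b) := hFpos _ hqb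
  set p : ℝ×ℝ := (F (1,a))⁻¹ • (((1:ℝ), a) : ℝ×ℝ) with hpdef
  set q : ℝ×ℝ := (F (-1,b))⁻¹ • (((-1:ℝ), b) : ℝ×ℝ) with hqdef
  have hppos : 0 < p.1 := by
    simp only [hpdef, Prod.smul_fst, smul_eq_mul, mul_one]
    positivity
  have hqneg : q.1 < 0 := by
    have h : 0 < (F (-1,b))⁻¹ := by positivity
    simp only [hqdef, Prod.smul_fst, smul_eq_mul, mul_neg_one]
    linarith
  refine ⟨p, q, fun h => by rw [h] at hppos; linarith, ?_⟩
  ext y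
  simp only [Set.mem_setOf_eq, Set.mem_insert_iff, Set.mem_singleton_iff]
  constructor
  · rintro ⟨hFy, hηy⟩
    have hy0 : y ≠ 0 := by
      intro h; rw [h, hF0] at hFy; norm_num at hFy
    have hg : S19.g2 F y = 0 :=
      (S19.eta_zero_iff hf2 hFhom hFconv η hη hy0).mp hηy
    have hf2y : S19.f2 F y = 1 := by simp [S19.f2, hFy]
    have hy1 : y.1 ≠ 0 := by
      intro h1
      have hyrep : y = y.2 • ((((0:ℝ),(1:ℝ))) : ℝ×ℝ) := by
        apply Prod.ext <;> simp [h1]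
      have he := S19.euler_f2 hf2 hFhom hy0
      have hL := map_smul (fderiv ℝ (S19.f2 F) y) y.2 ((((0:ℝ),(1:ℝ))) : ℝ×ℝ)
      rw [← hyrep] at hL
      rw [hL] at he
      have : y.2 * S19.g2 F y = 2 * S19.f2 F y := by
        simpa [S19.g2, smul_eq_mul] using he
      rw [hg, hf2y] at this
      norm_num at this
    rcases lt_or_gt_of_ne hy1 with hneg | hpos
    · -- y.1 < 0 : the point is q
      right
      have hc : 0 < -y.1 := by linarith
      have hz : (((-1:ℝ), y.2/(-y.1)) : ℝ×ℝ) ≠ 0 := fun h =>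
        (by norm_num : (-1:ℝ) ≠ 0) (congrArg Prod.fst h)
      have hyrep : y = (-y.1) • ((((-1:ℝ), y.2/(-y.1))) : ℝ×ℝ) := by
        apply Prod.ext
        · simp
        · simp only [Prod.smul_snd, smul_eq_mul]
          field_simp
      have hg2z : S19.g2 F (((-1:ℝ), y.2/(-y.1)) : ℝ×ℝ) = 0 := by
        have hsm := S19.g2_smul hf2 hFhom hc hz
        rw [← hyrep, hg] at hsm
        rcases mul_eq_zero.mp hsm.symm with h | h
        · linarith
        · exact h
      have hbeq : y.2 / (-y.1) = b := hbu _ hg2z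
      rw [hbeq] at hyrep
      have hFy' : (-y.1) * F ((-1:ℝ), b) = 1 := by
        rw [← hFhom (-y.1) _ hc, ← hyrep, hFy]
      have hcval : -y.1 = (F ((-1:ℝ), b))⁻¹ := by
        rw [inv_eq_one_div, eq_div_iff (ne_of_gt hFb)]
        linarith
      rw [hyrep, hcval]
    · -- y.1 > 0 : the point is p
      left
      have hc : 0 < y.1 := hpos
      have hz : (((1:ℝ), y.2/y.1) : ℝ×ℝ) ≠ 0 := fun h =>
        one_ne_zero (congrArg Prod.fst h)
      have hyrep : y = y.1 • ((((1:ℝ), y.2/y.1)) : ℝ×ℝ) := by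
        apply Prod.ext
        · simp
        · simp only [Prod.smul_snd, smul_eq_mul]
          field_simp
      have hg2z : S19.g2 F (((1:ℝ), y.2/y.1) : ℝ×ℝ) = 0 := by
        have hsm := S19.g2_smul hf2 hFhom hc hz
        rw [← hyrep, hg] at hsm
        rcases mul_eq_zero.mp hsm.symm with h | h
        · linarith
        · exact h
      have haeq : y.2 / y.1 = a := hau _ hg2z
      rw [haeq] at hyrep
      have hFy' : y.1 * F ((1:ℝ), a) = 1 := by
        rw [← hFhom y.1 _ hc, ← hyrep, hFy]
      have hcval : y.1 = (F ((1:ℝ), a))⁻¹ := by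
        rw [inv_eq_one_div, eq_div_iff (ne_of_gt hFa)]
        linarith
      rw [hyrep, hcval]
  · have hinva : 0 < (F ((1:ℝ),a))⁻¹ := by positivity
    have hinvb : 0 < (F ((-1:ℝ),b))⁻¹ := by positivity
    have hp0 : p ≠ 0 := by
      intro h; rw [h] at hppos; simp at hppos
    have hq0 : q ≠ 0 := by
      intro h; rw [h] at hqneg; simp at hqneg
    rintro (rfl | rfl)
    · constructor
      · rw [hpdef, hFhom _ _ hinva, inv_mul_cancel₀ (ne_of_gt hFa)]
      · refine (S19.eta_zero_iff hf2 hFhom hFconv η hη hp0).mpr ?_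
        rw [hpdef, S19.g2_smul hf2 hFhom hinva hpa, ha, mul_zero]
    · constructor
      · rw [hqdef, hFhom _ _ hinvb, inv_mul_cancel₀ (ne_of_gt hFb)]
      · refine (S19.eta_zero_iff hf2 hFhom hFconv η hη hq0).mpr ?_
        rw [hqdef, S19.g2_smul hf2 hFhom hinvb hqb, hb, mul_zero]
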